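/- arXiv:2311.17407 — 5 statements merged into one kernel-verified Lean document; each statement's English description precedes it below -/
import Mathlib

section
/- If Z ∈ ℝ^{(n+ℓ)×(n+ℓ−r)} has orthonormal columns with Range(Z) = Null([Ā, B̄]) where [Ā, B̄] = [Ā, ĀX] (X a solution of ĀX = B̄), and the lower ℓ×(n+ℓ−r) block Z_lower has full row rank, then X_min = −Z_upper Z_lower†, i.e. the matrix −Z_upper Z_lower† equals the minimal Frobenius norm solution of Ā X = B̄. -/
open Matrix

/-- Frobenius norm of a real matrix. -/
noncomputable def frobNorm {p q : ℕ} (M : Matrix (Fin p) (Fin q) ℝ) : ℝ :=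
  Real.sqrt (∑ i, ∑ j, (M i j) ^ 2)

/-- If `Z = [Z_upper; Z_lower]` is a column-orthonormal basis of
`Null([Ā  B̄])` with `B̄ = Ā X`, and `Z_lower` has full row rank, then
`−Z_upper Z_lower†` is the minimal Frobenius-norm solution of `Ā X = B̄`. -/
theorem min_norm_solution_from_null_basis {m n ℓ d : ℕ}
    (Abar : Matrix (Fin m) (Fin n) ℝ) (X : Matrix (Fin n) (Fin ℓ) ℝ)
    (Bbar : Matrix (Fin m) (Fin ℓ) ℝ) (hB : Bbar = Abar * X)
    (Zu : Matrix (Fin n) (Fin d) ℝ) (Zl : Matrix (Fin ℓ) (Fin d) ℝ)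
    (horth : Zuᵀ * Zu + Zlᵀ * Zl = 1)
    (hnull : ∀ (v : Fin n → ℝ) (w : Fin ℓ → ℝ),
      Abar.mulVec v + Bbar.mulVec w = 0 ↔
        ∃ c : Fin d → ℝ, v = Zu.mulVec c ∧ w = Zl.mulVec c)
    (hrank : Zl.rank = ℓ)
    (hZl : IsUnit (Zl * Zlᵀ)) :
    Abar * (-(Zu * (Zlᵀ * (Zl * Zlᵀ)⁻¹))) = Bbar ∧
    ∀ X' : Matrix (Fin n) (Fin ℓ) ℝ, Abar * X' = Bbar →
      frobNorm (-(Zu * (Zlᵀ * (Zl * Zlᵀ)⁻¹))) ≤ frobNorm X' := by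
  set G : Matrix (Fin ℓ) (Fin ℓ) ℝ := (Zl * Zlᵀ)⁻¹ with hG
  have hdet : IsUnit (Zl * Zlᵀ).det := (Matrix.isUnit_iff_isUnit_det _).mp hZl
  have hinv : (Zl * Zlᵀ) * G = 1 := Matrix.mul_nonsing_inv _ hdet
  set X₀ : Matrix (Fin n) (Fin ℓ) ℝ := -(Zu * (Zlᵀ * G)) with hX₀
  -- X₀ is a solution
  have hsol : Abar * X₀ = Bbar := by
    ext i j
    have h := (hnull (fun k => X₀ k j)
        (fun k => -((1 : Matrix (Fin ℓ) (Fin ℓ) ℝ) k j))).mpr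
      ⟨fun k => -((Zlᵀ * G) k j), ?_, ?_⟩
    · have h' := congrFun h i
      simp only [Pi.add_apply, Pi.zero_apply, Matrix.mulVec, dotProduct,
        Matrix.one_apply, mul_neg, mul_ite, mul_one, mul_zero,
        Finset.sum_neg_distrib, Finset.sum_ite_eq', Finset.mem_univ,
        if_true] at h'
      rw [Matrix.mul_apply]
      linarith
    · funext i'
      simp [Matrix.mulVec, dotProduct, hX₀, Matrix.mul_apply, mul_comm,
        Finset.sum_neg_distrib, mul_neg]
    · funext k
      have hkj : ((Zl * Zlᵀ) * G) k j = (1 : Matrix (Fin ℓ) (Fin ℓ) ℝ) k j := by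
        rw [hinv]
      rw [Matrix.mul_assoc, Matrix.mul_apply] at hkj
      simp only [Matrix.mulVec, dotProduct, mul_neg, Finset.sum_neg_distrib,
        neg_inj]
      exact hkj.symm
  refine ⟨hsol, ?_⟩
  intro X' hX'
  set D : Matrix (Fin n) (Fin ℓ) ℝ := X' - X₀ with hD
  have hAD : Abar * D = 0 := by
    rw [hD, Matrix.mul_sub, hX', hsol, sub_self]
  -- columns of D lie in the kernel, expressed via Z
  have hcol : ∀ j, ∃ c : Fin d → ℝ,
      (fun k => D k j) = Zu.mulVec c ∧ (0 : Fin ℓ → ℝ) = Zl.mulVec c := by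
    intro j
    apply (hnull (fun k => D k j) 0).mp
    funext i
    have : (Abar * D) i j = 0 := by rw [hAD]; rfl
    rw [Matrix.mul_apply] at this
    simp [Matrix.mulVec, dotProduct, this]
  choose c hc1 hc2 using hcol
  set C : Matrix (Fin d) (Fin ℓ) ℝ := Matrix.of (fun k j => c j k) with hC
  have hDC : D = Zu * C := by
    ext i j
    have := congrFun (hc1 j) i
    simpa [Matrix.mulVec, dotProduct, Matrix.mul_apply, hC] using this
  have hZC : Zl * C = 0 := by
    ext i j
    have := congrFun (hc2 j) i
    simp only [Pi.zero_apply, Matrix.mulVec, dotProduct] at this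
    simp [Matrix.mul_apply, hC, ← this]
  -- orthogonality : X₀ᵀ * D = 0
  have h1 : Zuᵀ * Zu = 1 - Zlᵀ * Zl := eq_sub_of_add_eq horth
  have h2 : Zuᵀ * (Zu * C) = C := by
    rw [← Matrix.mul_assoc, h1, Matrix.sub_mul, Matrix.one_mul,
      Matrix.mul_assoc, hZC, Matrix.mul_zero, sub_zero]
  have horthog : X₀ᵀ * D = 0 := by
    rw [hDC, hX₀]
    calc (-(Zu * (Zlᵀ * G)))ᵀ * (Zu * C)
        = -((Gᵀ * Zl) * (Zuᵀ * (Zu * C))) := by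
          simp only [Matrix.transpose_neg, Matrix.transpose_mul,
            Matrix.transpose_transpose, Matrix.neg_mul]
          rw [Matrix.mul_assoc]
      _ = -((Gᵀ * Zl) * C) := by rw [h2]
      _ = 0 := by rw [Matrix.mul_assoc, hZC, Matrix.mul_zero, neg_zero]
  -- cross term vanishes
  have hcross : ∑ i, ∑ j, X₀ i j * D i j = 0 := by
    have htr : ∑ j, (X₀ᵀ * D) j j = 0 := by
      rw [horthog]; simp
    rw [Finset.sum_comm]
    calc ∑ j, ∑ i, X₀ i j * D i j = ∑ j, (X₀ᵀ * D) j j := by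
          refine Finset.sum_congr rfl fun j _ => ?_
          rw [Matrix.mul_apply]
          rfl
      _ = 0 := htr
  -- Pythagorean inequality
  have hexp : ∀ i j, X' i j = X₀ i j + D i j := by
    intro i j; simp [hD]
  unfold frobNorm
  apply Real.sqrt_le_sqrt
  have key : ∑ i, ∑ j, (X' i j) ^ 2
      = ((∑ i, ∑ j, (X₀ i j) ^ 2) + ∑ i, ∑ j, (D i j) ^ 2)
        + 2 * ∑ i, ∑ j, X₀ i j * D i j := by
    have e : ∀ i j, (X' i j) ^ 2
        = ((X₀ i j) ^ 2 + (D i j) ^ 2) + 2 * (X₀ i j * D i j) := fun i j => by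
      rw [hexp i j]; ring
    simp_rw [e]
    simp only [Finset.sum_add_distrib, Finset.mul_sum]
  rw [key, hcross]
  have hnn : 0 ≤ ∑ i, ∑ j, (D i j) ^ 2 :=
    Finset.sum_nonneg fun i _ => Finset.sum_nonneg fun j _ => sq_nonneg _
  linarith
end

section
/- Let Z = [Z_upper; Z_lower] be column-orthonormal with Range(Z) = Null([Ā B̄]), and let Z_lower^⊥ ∈ ℝ^{(n+ℓ−r)×(n−r)} have full column rank with Z_lower Z_lower^⊥ = 0. Then Range(Z_upper Z_lower^⊥) = Null(Ā). -/
open Matrix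

/-- If `Z = [Z_upper; Z_lower]` is a column-orthonormal basis of `Null([Ā  B̄])`
with `B̄ = Ā X`, and `Z_lower^⊥` has full column rank with
`Z_lower Z_lower^⊥ = 0` (so it spans `Null(Z_lower)`), then
`Range(Z_upper Z_lower^⊥) = Null(Ā)`. -/
theorem range_upper_perp_eq_null {m n ℓ r : ℕ} (hrn : r ≤ n)
    (Abar : Matrix (Fin m) (Fin n) ℝ) (X : Matrix (Fin n) (Fin ℓ) ℝ)
    (Bbar : Matrix (Fin m) (Fin ℓ) ℝ) (hB : Bbar = Abar * X)
    (hArank : Abar.rank = r)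
    (Zu : Matrix (Fin n) (Fin (n + ℓ - r)) ℝ) (Zl : Matrix (Fin ℓ) (Fin (n + ℓ - r)) ℝ)
    (horth : Zuᵀ * Zu + Zlᵀ * Zl = 1)
    (hnull : ∀ (v : Fin n → ℝ) (w : Fin ℓ → ℝ),
      Abar.mulVec v + Bbar.mulVec w = 0 ↔
        ∃ c : Fin (n + ℓ - r) → ℝ, v = Zu.mulVec c ∧ w = Zl.mulVec c)
    (Zlp : Matrix (Fin (n + ℓ - r)) (Fin (n - r)) ℝ)
    (hZlprank : Zlp.rank = n - r)
    (hZlp : Zl * Zlp = 0) :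
    ∀ v : Fin n → ℝ,
      Abar.mulVec v = 0 ↔ ∃ c : Fin (n - r) → ℝ, v = (Zu * Zlp).mulVec c := by
  -- Zl's linear map is surjective
  have hsurj : Function.Surjective Zl.mulVecLin := by
    intro w
    have h1 : Abar.mulVec (-(X.mulVec w)) + Bbar.mulVec w = 0 := by
      rw [hB, Matrix.mulVec_neg, ← Matrix.mulVec_mulVec]
      abel
    obtain ⟨c', _, h2⟩ := (hnull _ w).mp h1
    exact ⟨c', h2.symm⟩
  have hker : Module.finrank ℝ (LinearMap.ker Zl.mulVecLin) = n - r := by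
    have h := LinearMap.finrank_range_add_finrank_ker Zl.mulVecLin
    rw [LinearMap.range_eq_top.mpr hsurj, finrank_top] at h
    simp only [Module.finrank_pi, Fintype.card_fin] at h
    omega
  have hle : LinearMap.range Zlp.mulVecLin ≤ LinearMap.ker Zl.mulVecLin := by
    rintro x ⟨d, rfl⟩
    simp only [LinearMap.mem_ker, Matrix.mulVecLin_apply, Matrix.mulVec_mulVec, hZlp,
      Matrix.zero_mulVec]
  have heq : LinearMap.range Zlp.mulVecLin = LinearMap.ker Zl.mulVecLin := by
    apply Submodule.eq_of_le_of_finrank_eq hle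
    rw [hker]
    exact hZlprank
  intro v
  constructor
  · intro hv
    have h0 : Abar.mulVec v + Bbar.mulVec 0 = 0 := by
      simp [hv]
    obtain ⟨c, hcv, hcw⟩ := (hnull v 0).mp h0
    have hc : c ∈ LinearMap.ker Zl.mulVecLin := by
      simp only [LinearMap.mem_ker, Matrix.mulVecLin_apply]
      exact hcw.symm
    rw [← heq] at hc
    obtain ⟨d, hd⟩ := hc
    refine ⟨d, ?_⟩
    rw [hcv, ← hd]
    simp [Matrix.mulVec_mulVec, Matrix.mulVecLin_apply]
  · rintro ⟨c, rfl⟩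
    have h0 := (hnull ((Zu * Zlp).mulVec c) 0).mpr
      ⟨Zlp.mulVec c, by rw [Matrix.mulVec_mulVec], by rw [Matrix.mulVec_mulVec, hZlp]; simp⟩
    simpa using h0
end

section
/- The null space of the matrix [Ā ĀX] ∈ ℝ^{m×(n+ℓ)} equals the range of the matrix Ȳ = [[−X_min, W],[I_ℓ, 0]] ∈ ℝ^{(n+ℓ)×(n+ℓ−r)}, where X_min is the minimal norm solution of ĀX' = ĀX and Range(W) = Null(Ā); in particular Ȳ has full column rank n+ℓ−r. -/
open Matrix

lemma mulVec_injective_of_rank {p q : ℕ} (W : Matrix (Fin p) (Fin q) ℝ)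
    (h : W.rank = q) : Function.Injective W.mulVec := by
  have hker : LinearMap.ker W.mulVecLin = ⊥ := by
    have := LinearMap.finrank_range_add_finrank_ker W.mulVecLin
    rw [show Module.finrank ℝ ↥(LinearMap.range W.mulVecLin) = q from h] at this
    have hdom : Module.finrank ℝ (Fin q → ℝ) = q := by simp
    rw [hdom] at this
    have : Module.finrank ℝ ↥(LinearMap.ker W.mulVecLin) = 0 := by omega
    exact Submodule.finrank_eq_zero.mp this
  intro a b hab
  exact LinearMap.ker_eq_bot.mp hker hab

/-- The null space of `[Ā  ĀX]` equals the range of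
`Ȳ = [[−X_min, W],[I_ℓ, 0]]`, where `X_min` is the minimal-norm solution of
`Ā X' = Ā X` and the full-column-rank matrix `W` spans `Null(Ā)`; in particular
`Ȳ` has full column rank `n + ℓ − r`. -/
theorem null_space_eq_range_Ybar {m n ℓ r : ℕ} (hrn : r ≤ n)
    (Abar : Matrix (Fin m) (Fin n) ℝ) (X : Matrix (Fin n) (Fin ℓ) ℝ)
    (hArank : Abar.rank = r)
    (W : Matrix (Fin n) (Fin (n - r)) ℝ)
    (hWrank : W.rank = n - r)
    (hW : ∀ v : Fin n → ℝ, Abar.mulVec v = 0 ↔ ∃ c : Fin (n - r) → ℝ, v = W.mulVec c)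
    (Xmin : Matrix (Fin n) (Fin ℓ) ℝ)
    (hXmin : Abar * Xmin = Abar * X)
    (hmin : ∀ X' : Matrix (Fin n) (Fin ℓ) ℝ, Abar * X' = Abar * X →
      frobNorm Xmin ≤ frobNorm X') :
    (∀ (v : Fin n → ℝ) (w : Fin ℓ → ℝ),
      Abar.mulVec v + (Abar * X).mulVec w = 0 ↔
        ∃ (c : Fin ℓ → ℝ) (e : Fin (n - r) → ℝ),
          v = -(Xmin.mulVec c) + W.mulVec e ∧ w = c) ∧
    Function.Injective (fun p : (Fin ℓ → ℝ) × (Fin (n - r) → ℝ) =>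
      ((-(Xmin.mulVec p.1) + W.mulVec p.2 : Fin n → ℝ), (p.1 : Fin ℓ → ℝ))) := by
  have hWinj := mulVec_injective_of_rank W hWrank
  constructor
  · intro v w
    constructor
    · intro h
      refine ⟨w, ?_⟩
      have h2 : Abar.mulVec (v + Xmin.mulVec w) = 0 := by
        rw [mulVec_add, mulVec_mulVec, hXmin]
        exact h
      obtain ⟨e, he⟩ := (hW _).mp h2
      exact ⟨e, by rw [← he]; abel, rfl⟩
    · rintro ⟨c, e, rfl, rfl⟩
      have hWc : Abar.mulVec (W.mulVec e) = 0 := (hW _).mpr ⟨e, rfl⟩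
      have hx : (Abar * X).mulVec w = Abar.mulVec (Xmin.mulVec w) := by
        rw [← hXmin, mulVec_mulVec]
      rw [hx, mulVec_add, mulVec_neg, hWc]
      abel
  · rintro ⟨c1, e1⟩ ⟨c2, e2⟩ h
    simp only [Prod.mk.injEq] at h
    obtain ⟨h1, h2⟩ := h
    subst h2
    have hv : W.mulVec e1 = W.mulVec e2 := by
      simpa using congrArg (fun v => Xmin.mulVec c1 + v) h1
    exact Prod.ext rfl (hWinj hv)
end

section
/- Subspace convergence from matrix convergence (Davis–Kahan-type): let G_m be symmetric matrices with G_m → T̄ + σ² I, where T̄ ⪰ 0 has null space of dimension d and smallest nonzero eigenvalue ≥ δ > 0. Let V_m be any column-orthonormal matrix whose columns span the eigenspace of G_m for its d smallest eigenvalues, and let V̄ be column-orthonormal spanning Null(T̄). Then ‖(I − V̄ V̄ᵀ) V_m‖ → 0 as m → ∞. -/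
open Matrix Filter

/-!
Write `P̄ = V̄ V̄ᵀ`, `A = T̄ + σ² I` and `η_m = ∑ᵢⱼ |(G_m - A)ᵢⱼ|`, so that
`-η_m I ≤ G_m - A ≤ η_m I` in the Loewner order. The eigenvalue gap gives `δ (I - P̄) ≤ T̄`, hence
`tr (V_mᵀ A V_m) ≥ d σ² + δ ‖(I - P̄) V_m‖_F²`. Since the columns of `V_m` span a bottom eigenspace
of `G_m`, Ky Fan's minimum principle gives
`tr (V_mᵀ G_m V_m) ≤ tr (V̄ᵀ G_m V̄) ≤ tr (V̄ᵀ A V̄) + d η_m = d σ² + d η_m`.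
Together `δ ‖(I - P̄) V_m‖_F² ≤ 2 d η_m → 0`.
-/

open scoped MatrixOrder

theorem LinearMap.IsSymmetric.exists_eigenvector_mul_inner_self_le
    {E : Type*} [NormedAddCommGroup E] [InnerProductSpace ℝ E] [FiniteDimensional ℝ E]
    [Nontrivial E] {T : E →ₗ[ℝ] E} (hT : T.IsSymmetric) :
    ∃ lam : ℝ, ∃ x₀ : E, x₀ ≠ 0 ∧ T x₀ = lam • x₀ ∧
      ∀ x, lam * inner ℝ x x ≤ inner ℝ (T x) x := by
  set T' := LinearMap.toContinuousLinearMap T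
  obtain ⟨x₀, hx₀, hx₀ne⟩ :=
    Submodule.exists_mem_ne_zero_of_ne_bot hT.hasEigenvalue_iInf_of_finiteDimensional
  refine ⟨_, x₀, hx₀ne, Module.End.mem_eigenspace_iff.mp hx₀, fun x => ?_⟩
  rcases eq_or_ne x 0 with rfl | hx
  · simp
  have hbdd : BddBelow (Set.range fun y : {y : E // y ≠ 0} => T'.rayleighQuotient y) :=
    ⟨-‖T'‖, by rintro _ ⟨y, rfl⟩; exact neg_le_of_abs_le (T'.rayleighQuotient_le_norm y)⟩
  have := ciInf_le hbdd ⟨x, hx⟩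
  rwa [le_div_iff₀ (by positivity), ← real_inner_self_eq_norm_sq] at this

theorem Matrix.IsSymm.exists_eigenvector_mul_dotProduct_le {n : Type*} [Fintype n]
    [DecidableEq n] {M : Matrix n n ℝ} (hM : M.IsSymm) {S : Submodule ℝ (n → ℝ)}
    (hS : ∀ x ∈ S, M *ᵥ x ∈ S) {x₀ : n → ℝ} (hx₀S : x₀ ∈ S) (hx₀ : x₀ ≠ 0) :
    ∃ lam : ℝ, ∃ w ∈ S, w ≠ 0 ∧ M *ᵥ w = lam • w ∧
      ∀ x ∈ S, lam * (x ⬝ᵥ x) ≤ x ⬝ᵥ M *ᵥ x := by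
  let e := WithLp.linearEquiv 2 ℝ (n → ℝ)
  let S' := S.comap e.toLinearMap
  have hS' : ∀ x ∈ S', M.toEuclideanLin x ∈ S' := fun x hx => hS _ hx
  have : Nontrivial S' :=
    ⟨⟨⟨WithLp.toLp 2 x₀, hx₀S⟩, 0, fun h => hx₀ (by simpa using congrArg (e ·.1) h)⟩⟩
  have hsymm : (M.toEuclideanLin.restrict hS').IsSymmetric :=
    (isSymmetric_toEuclideanLin_iff.mpr (isHermitian_iff_isSymm.mpr hM)).restrict_invariant hS'
  obtain ⟨lam, w, hw0, hw, hle⟩ := hsymm.exists_eigenvector_mul_inner_self_le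
  refine ⟨lam, e w, w.2, fun h => hw0 (Subtype.ext (e.injective (by simpa using h))),
    congrArg (e ·.1) hw, fun x hx => ?_⟩
  have := hle ⟨WithLp.toLp 2 x, hx⟩
  simp only [Submodule.coe_inner, LinearMap.coe_restrict_apply,
    EuclideanSpace.inner_eq_star_dotProduct] at this
  simpa [dotProduct_comm, toLpLin_apply] using this

namespace Matrix

variable {n k k' : Type*}

theorem le_of_forall_dotProduct_mulVec_le [Fintype n] {A B : Matrix n n ℝ} (hA : A.IsSymm)
    (hB : B.IsSymm) (h : ∀ x, x ⬝ᵥ A *ᵥ x ≤ x ⬝ᵥ B *ᵥ x) : A ≤ B := by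
  refine le_iff.mpr <| .of_dotProduct_mulVec_nonneg (isHermitian_iff_isSymm.mpr (hB.sub hA))
    fun x => ?_
  simpa [sub_mulVec, dotProduct_sub] using h x

theorem trace_transpose_mul_mul_mono [Fintype n] [Fintype k] {A B : Matrix n n ℝ} (h : A ≤ B)
    (X : Matrix n k ℝ) : (Xᵀ * A * X).trace ≤ (Xᵀ * B * X).trace := by
  have := ((le_iff.mp h).conjTranspose_mul_mul_same X).trace_nonneg
  rw [conjTranspose_eq_transpose_of_trivial, Matrix.mul_sub, Matrix.sub_mul, trace_sub] at this
  linarith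

theorem trace_transpose_mul_smul_one_mul [Fintype n] [Fintype k] [DecidableEq n] [DecidableEq k]
    {X : Matrix n k ℝ} (hX : Xᵀ * X = 1) (c : ℝ) :
    (Xᵀ * (c • (1 : Matrix n n ℝ)) * X).trace = c * Fintype.card k := by
  rw [Matrix.mul_smul, Matrix.mul_one, Matrix.smul_mul, hX, trace_smul, trace_one, smul_eq_mul]

theorem abs_dotProduct_mulVec_le [Fintype n] (M : Matrix n n ℝ) (x : n → ℝ) :
    |x ⬝ᵥ M *ᵥ x| ≤ (∑ i, ∑ j, |M i j|) * (x ⬝ᵥ x) := by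
  have hsq : ∀ i, x i ^ 2 ≤ x ⬝ᵥ x := fun i =>
    (sq (x i)).trans_le (Finset.single_le_sum (f := fun j => x j * x j)
      (fun j _ => mul_self_nonneg (x j)) (Finset.mem_univ i))
  have hpair : ∀ i j, |x i * x j| ≤ x ⬝ᵥ x := fun i j => by
    rw [abs_mul]
    nlinarith [hsq i, hsq j, sq_abs (x i), sq_abs (x j), sq_nonneg (|x i| - |x j|)]
  calc |x ⬝ᵥ M *ᵥ x| = |∑ i, ∑ j, M i j * (x i * x j)| := by
        simp only [dotProduct, mulVec, Finset.mul_sum]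
        congr 1
        exact Finset.sum_congr rfl fun i _ => Finset.sum_congr rfl fun j _ => by ring
    _ ≤ ∑ i, ∑ j, |M i j| * (x ⬝ᵥ x) := by
        refine (Finset.abs_sum_le_sum_abs _ _).trans (Finset.sum_le_sum fun i _ => ?_)
        refine (Finset.abs_sum_le_sum_abs _ _).trans (Finset.sum_le_sum fun j _ => ?_)
        rw [abs_mul]
        exact mul_le_mul_of_nonneg_left (hpair i j) (abs_nonneg _)
    _ = (∑ i, ∑ j, |M i j|) * (x ⬝ᵥ x) := by simp only [Finset.sum_mul]

theorem abs_trace_transpose_mul_mul_le [Fintype n] [Fintype k] [DecidableEq n] [DecidableEq k]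
    {M : Matrix n n ℝ} (hM : M.IsSymm) {X : Matrix n k ℝ} (hX : Xᵀ * X = 1) :
    |(Xᵀ * M * X).trace| ≤ (∑ i, ∑ j, |M i j|) * Fintype.card k := by
  set η := ∑ i, ∑ j, |M i j|
  have hsymm : ∀ c : ℝ, (c • (1 : Matrix n n ℝ)).IsSymm := fun c => isSymm_one.smul c
  have hupper : M ≤ η • 1 := le_of_forall_dotProduct_mulVec_le hM (hsymm η) fun x => by
    simpa [smul_mulVec, dotProduct_smul] using (abs_le.mp (abs_dotProduct_mulVec_le M x)).2
  have hlower : (-η) • 1 ≤ M := le_of_forall_dotProduct_mulVec_le (hsymm (-η)) hM fun x => by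
    simpa [smul_mulVec, dotProduct_smul, neg_mulVec] using
      (abs_le.mp (abs_dotProduct_mulVec_le M x)).1
  have h1 := trace_transpose_mul_mul_mono hupper X
  have h2 := trace_transpose_mul_mul_mono hlower X
  rw [trace_transpose_mul_smul_one_mul hX] at h1 h2
  exact abs_le.mpr ⟨by linarith, h1⟩

theorem isSymm_one_sub_mul_transpose [Fintype k] [DecidableEq n] (V : Matrix n k ℝ) :
    (1 - V * Vᵀ).IsSymm :=
  isSymm_one.sub (by rw [IsSymm, transpose_mul, transpose_transpose])

theorem transpose_mul_one_sub_mul_transpose [Fintype n] [Fintype k] [DecidableEq n]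
    [DecidableEq k] {V : Matrix n k ℝ} (hV : Vᵀ * V = 1) : Vᵀ * (1 - V * Vᵀ) = 0 := by
  rw [Matrix.mul_sub, Matrix.mul_one, ← Matrix.mul_assoc, hV, Matrix.one_mul, sub_self]

theorem one_sub_mul_transpose_mul_self [Fintype n] [Fintype k] [DecidableEq n] [DecidableEq k]
    {V : Matrix n k ℝ} (hV : Vᵀ * V = 1) : (1 - V * Vᵀ) * (1 - V * Vᵀ) = 1 - V * Vᵀ := by
  rw [Matrix.sub_mul, Matrix.one_mul, Matrix.mul_assoc, transpose_mul_one_sub_mul_transpose hV,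
    Matrix.mul_zero, sub_zero]

theorem transpose_mul_one_sub_mul_self [Fintype n] [Fintype k] [DecidableEq n] [DecidableEq k]
    {V : Matrix n k ℝ} (hV : Vᵀ * V = 1) (X : Matrix n k' ℝ) :
    ((1 - V * Vᵀ) * X)ᵀ * ((1 - V * Vᵀ) * X) = Xᵀ * (1 - V * Vᵀ) * X := by
  rw [transpose_mul, (isSymm_one_sub_mul_transpose V).eq, Matrix.mul_assoc,
    ← Matrix.mul_assoc _ _ X, one_sub_mul_transpose_mul_self hV, Matrix.mul_assoc]

theorem posSemidef_transpose_mul_one_sub_mul [Fintype n] [Fintype k] [Fintype k']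
    [DecidableEq n] [DecidableEq k] {V : Matrix n k ℝ} (hV : Vᵀ * V = 1) (X : Matrix n k' ℝ) :
    (Xᵀ * (1 - V * Vᵀ) * X).PosSemidef := by
  have := posSemidef_conjTranspose_mul_self ((1 - V * Vᵀ) * X)
  rwa [conjTranspose_eq_transpose_of_trivial, transpose_mul_one_sub_mul_self hV] at this

theorem transpose_mul_one_sub_mul_transpose_mul [Fintype n] [Fintype k'] [DecidableEq n]
    [DecidableEq k]
    {U : Matrix n k ℝ} (hU : Uᵀ * U = 1) (V : Matrix n k' ℝ) :
    Uᵀ * (1 - V * Vᵀ) * U = 1 - Uᵀ * V * (Vᵀ * U) := by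
  rw [Matrix.mul_sub, Matrix.sub_mul, Matrix.mul_one, hU, Matrix.mul_assoc, Matrix.mul_assoc,
    Matrix.mul_assoc]

theorem dotProduct_mulVec_conj_one_sub_mul_transpose [Fintype n] [Fintype k] [DecidableEq n]
    (V : Matrix n k ℝ) (M : Matrix n n ℝ) (x : n → ℝ) :
    x ⬝ᵥ ((1 - V * Vᵀ) * M * (1 - V * Vᵀ)) *ᵥ x =
      ((1 - V * Vᵀ) *ᵥ x) ⬝ᵥ M *ᵥ ((1 - V * Vᵀ) *ᵥ x) := by
  rw [← mulVec_mulVec, ← mulVec_mulVec, dotProduct_mulVec x, ← mulVec_transpose,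
    (isSymm_one_sub_mul_transpose V).eq]

theorem smul_le_conj_of_forall_transpose_mulVec_eq_zero [Fintype n] [Fintype k] [DecidableEq n]
    [DecidableEq k] {M : Matrix n n ℝ} (hM : M.IsSymm) {V : Matrix n k ℝ} (hV : Vᵀ * V = 1)
    {c : ℝ} (h : ∀ w, Vᵀ *ᵥ w = 0 → c * (w ⬝ᵥ w) ≤ w ⬝ᵥ M *ᵥ w) :
    c • (1 - V * Vᵀ) ≤ (1 - V * Vᵀ) * M * (1 - V * Vᵀ) := by
  have hQ := isSymm_one_sub_mul_transpose V
  refine le_of_forall_dotProduct_mulVec_le (hQ.smul c)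
    (by simp [IsSymm, transpose_mul, hQ.eq, hM.eq, Matrix.mul_assoc]) fun x => ?_
  have hw : Vᵀ *ᵥ ((1 - V * Vᵀ) *ᵥ x) = 0 := by
    rw [mulVec_mulVec, transpose_mul_one_sub_mul_transpose hV, zero_mulVec]
  have hnorm := dotProduct_mulVec_conj_one_sub_mul_transpose V 1 x
  rw [Matrix.mul_one, one_sub_mul_transpose_mul_self hV, one_mulVec] at hnorm
  rw [smul_mulVec, dotProduct_smul, smul_eq_mul, hnorm,
    dotProduct_mulVec_conj_one_sub_mul_transpose]
  exact h _ hw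

theorem mul_eq_zero_of_forall_mulVec_eq_zero_iff [Fintype n] [Fintype k] {T : Matrix n n ℝ}
    {W : Matrix n k ℝ} (hker : ∀ v, T *ᵥ v = 0 ↔ ∃ c, v = W *ᵥ c) : T * W = 0 :=
  ext_iff_mulVec.mpr fun c => by
    rw [← mulVec_mulVec, zero_mulVec]
    exact (hker _).mpr ⟨c, rfl⟩

theorem smul_one_sub_mul_transpose_le_of_eigenvalue_gap [Fintype n] [Fintype k] [DecidableEq n]
    [DecidableEq k] {T : Matrix n n ℝ} (hT : T.IsSymm) {V : Matrix n k ℝ} (hV : Vᵀ * V = 1)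
    (hker : ∀ v, T *ᵥ v = 0 ↔ ∃ c, v = V *ᵥ c) {δ : ℝ}
    (hgap : ∀ (lam : ℝ) (v : n → ℝ), v ≠ 0 → T *ᵥ v = lam • v → lam ≠ 0 → δ ≤ lam) :
    δ • (1 - V * Vᵀ) ≤ T := by
  have hTV := mul_eq_zero_of_forall_mulVec_eq_zero_iff hker
  have hVT : Vᵀ * T = 0 := by simpa [transpose_mul, hT.eq] using congrArg transpose hTV
  have hconj : (1 - V * Vᵀ) * T * (1 - V * Vᵀ) = T := by
    rw [Matrix.sub_mul, Matrix.one_mul, Matrix.mul_assoc V, hVT, Matrix.mul_zero, sub_zero,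
      Matrix.mul_sub, Matrix.mul_one, ← Matrix.mul_assoc, hTV, Matrix.zero_mul, sub_zero]
  refine hconj ▸ smul_le_conj_of_forall_transpose_mulVec_eq_zero hT hV fun w hw => ?_
  rcases eq_or_ne w 0 with rfl | hw0
  · simp
  obtain ⟨lam, u, huV, hu0, hTu, hle⟩ :=
    hT.exists_eigenvector_mul_dotProduct_le (S := LinearMap.ker Vᵀ.mulVecLin)
      (fun x (hx : Vᵀ *ᵥ x = 0) => show Vᵀ *ᵥ (T *ᵥ x) = 0 by
        rw [mulVec_mulVec, hVT, zero_mulVec]) hw hw0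
  -- a zero eigenvalue would put `u` both in `ker T = range V` and in `ker Vᵀ`
  have hlam : lam ≠ 0 := by
    rintro rfl
    obtain ⟨c, rfl⟩ := (hker u).mp (by simpa using hTu)
    have hc : c = 0 := by rw [← one_mulVec c, ← hV, ← mulVec_mulVec]; exact huV
    exact hu0 (by simp [hc])
  calc δ * (w ⬝ᵥ w) ≤ lam * (w ⬝ᵥ w) :=
        mul_le_mul_of_nonneg_right (hgap lam u hu0 hTu hlam)
          (Finset.sum_nonneg fun i _ => mul_self_nonneg (w i))
    _ ≤ w ⬝ᵥ T *ᵥ w := hle w hw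

theorem exists_smul_le_conj_of_bottom [Fintype n] [Fintype k] [DecidableEq n] [DecidableEq k]
    {G : Matrix n n ℝ} (hG : G.IsSymm) {V : Matrix n k ℝ} (hV : Vᵀ * V = 1) {μ : k → ℝ}
    (hGV : G * V = V * diagonal μ)
    (hbottom : ∀ (lam : ℝ) (w : n → ℝ), w ≠ 0 → G *ᵥ w = lam • w → Vᵀ *ᵥ w = 0 →
      ∀ a, μ a ≤ lam) :
    ∃ lam, (∀ a, μ a ≤ lam) ∧ lam • (1 - V * Vᵀ) ≤ (1 - V * Vᵀ) * G * (1 - V * Vᵀ) := by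
  by_cases hker : ∃ w, w ≠ 0 ∧ Vᵀ *ᵥ w = 0
  · obtain ⟨w₀, hw₀, hw₀V⟩ := hker
    have hVG : Vᵀ * G = diagonal μ * Vᵀ := by
      simpa [transpose_mul, hG.eq] using congrArg transpose hGV
    obtain ⟨lam, w, hwV, hw0, hGw, hle⟩ :=
      hG.exists_eigenvector_mul_dotProduct_le (S := LinearMap.ker Vᵀ.mulVecLin)
        (fun x (hx : Vᵀ *ᵥ x = 0) => show Vᵀ *ᵥ (G *ᵥ x) = 0 by
          rw [mulVec_mulVec, hVG, ← mulVec_mulVec, hx, mulVec_zero]) hw₀V hw₀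
    exact ⟨lam, hbottom lam w hw0 hGw hwV,
      smul_le_conj_of_forall_transpose_mulVec_eq_zero hG hV hle⟩
  · -- `ker Vᵀ = 0`, so any upper bound of `μ` will do
    refine ⟨∑ a, |μ a|, fun a => (le_abs_self _).trans (Finset.single_le_sum
      (fun b _ => abs_nonneg (μ b)) (Finset.mem_univ a)),
      smul_le_conj_of_forall_transpose_mulVec_eq_zero hG hV fun w hw => ?_⟩
    obtain rfl : w = 0 := by_contra fun h => hker ⟨w, h, hw⟩
    simp

/-- Ky Fan's minimum principle. -/
theorem trace_transpose_mul_mul_le_of_bottom [Fintype n] [Fintype k] [DecidableEq n]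
    [DecidableEq k] {G : Matrix n n ℝ} (hG : G.IsSymm) {V U : Matrix n k ℝ} (hV : Vᵀ * V = 1)
    (hU : Uᵀ * U = 1) {μ : k → ℝ} (hGV : G * V = V * diagonal μ)
    (hbottom : ∀ (lam : ℝ) (w : n → ℝ), w ≠ 0 → G *ᵥ w = lam • w → Vᵀ *ᵥ w = 0 →
      ∀ a, μ a ≤ lam) :
    (Vᵀ * G * V).trace ≤ (Uᵀ * G * U).trace := by
  obtain ⟨lam, hμ, hlam⟩ := exists_smul_le_conj_of_bottom hG hV hGV hbottom
  have hVG : Vᵀ * G = diagonal μ * Vᵀ := by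
    simpa [transpose_mul, hG.eq] using congrArg transpose hGV
  have hdecomp : V * diagonal μ * Vᵀ + (1 - V * Vᵀ) * G * (1 - V * Vᵀ) = G := by
    simp only [Matrix.sub_mul, Matrix.mul_sub, Matrix.one_mul, Matrix.mul_one, Matrix.mul_assoc,
      hVG, ← Matrix.mul_assoc G, hGV]
    rw [← Matrix.mul_assoc Vᵀ V, hV, Matrix.one_mul]
    abel
  set R := Vᵀ * (1 - U * Uᵀ) * V with hRdef
  have hR : R.PosSemidef := posSemidef_transpose_mul_one_sub_mul hU V
  have hVU : Vᵀ * U * (Uᵀ * V) = 1 - R := by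
    rw [hRdef, transpose_mul_one_sub_mul_transpose_mul hV, sub_sub_cancel]
  have hrange : (Uᵀ * (V * diagonal μ * Vᵀ) * U).trace = (diagonal μ * (1 - R)).trace := by
    rw [← hVU, show Uᵀ * (V * diagonal μ * Vᵀ) * U = Uᵀ * V * (diagonal μ * (Vᵀ * U)) by
      simp only [Matrix.mul_assoc], trace_mul_comm, Matrix.mul_assoc]
  have hkernel : (Uᵀ * (1 - V * Vᵀ) * U).trace = R.trace := by
    rw [transpose_mul_one_sub_mul_transpose_mul hU, trace_sub, trace_mul_comm (Uᵀ * V), hVU,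
      trace_sub, sub_sub_cancel]
  have hDR : (diagonal μ * R).trace ≤ lam * R.trace := by
    simp only [trace, diag, diagonal_mul, Finset.mul_sum]
    exact Finset.sum_le_sum fun a _ => mul_le_mul_of_nonneg_right (hμ a) hR.diag_nonneg
  have hle : V * diagonal μ * Vᵀ + lam • (1 - V * Vᵀ) ≤ G := by
    conv_rhs => rw [← hdecomp]
    exact add_le_add le_rfl hlam
  calc (Vᵀ * G * V).trace = (diagonal μ).trace := by
        rw [hVG, Matrix.mul_assoc, hV, Matrix.mul_one]
    _ ≤ (diagonal μ * (1 - R)).trace + lam * R.trace := by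
        rw [Matrix.mul_sub, Matrix.mul_one, trace_sub]
        linarith
    _ = (Uᵀ * (V * diagonal μ * Vᵀ + lam • (1 - V * Vᵀ)) * U).trace := by
        rw [Matrix.mul_add, Matrix.add_mul, trace_add, Matrix.mul_smul, Matrix.smul_mul,
          trace_smul, hrange, hkernel, smul_eq_mul]
    _ ≤ (Uᵀ * G * U).trace := trace_transpose_mul_mul_mono hle U

end Matrix

theorem mul_trace_transpose_mul_one_sub_mul_le {n k : Type*} [Fintype n] [Fintype k]
    [DecidableEq n] [DecidableEq k] {T G : Matrix n n ℝ} (hT : T.IsSymm) (hG : G.IsSymm)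
    {W V : Matrix n k ℝ} (hW : Wᵀ * W = 1) (hV : Vᵀ * V = 1)
    (hker : ∀ v, T *ᵥ v = 0 ↔ ∃ c, v = W *ᵥ c) {δ : ℝ}
    (hgap : ∀ (lam : ℝ) (v : n → ℝ), v ≠ 0 → T *ᵥ v = lam • v → lam ≠ 0 → δ ≤ lam)
    {μ : k → ℝ} (hGV : G * V = V * diagonal μ)
    (hbottom : ∀ (lam : ℝ) (w : n → ℝ), w ≠ 0 → G *ᵥ w = lam • w → Vᵀ *ᵥ w = 0 →
      ∀ a, μ a ≤ lam) (σ : ℝ) :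
    δ * (Vᵀ * (1 - W * Wᵀ) * V).trace ≤
      2 * Fintype.card k * ∑ i, ∑ j, |(G - (T + σ • (1 : Matrix n n ℝ))) i j| := by
  set A := T + σ • (1 : Matrix n n ℝ)
  set η := ∑ i, ∑ j, |(G - A) i j|
  have htrace : ∀ X : Matrix n k ℝ, Xᵀ * X = 1 →
      (Xᵀ * A * X).trace = (Xᵀ * T * X).trace + σ * Fintype.card k := fun X hX => by
    rw [Matrix.mul_add, Matrix.add_mul, trace_add, trace_transpose_mul_smul_one_mul hX]
  have hperturb : ∀ X : Matrix n k ℝ, Xᵀ * X = 1 →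
      |(Xᵀ * G * X).trace - (Xᵀ * A * X).trace| ≤ η * Fintype.card k := fun X hX => by
    rw [← trace_sub, ← Matrix.sub_mul, ← Matrix.mul_sub]
    exact abs_trace_transpose_mul_mul_le (hG.sub (hT.add (isSymm_one.smul σ))) hX
  have hgapV := trace_transpose_mul_mul_mono
    (smul_one_sub_mul_transpose_le_of_eigenvalue_gap hT hW hker hgap) V
  rw [Matrix.mul_smul, Matrix.smul_mul, trace_smul, smul_eq_mul] at hgapV
  have hTW : (Wᵀ * T * W).trace = 0 := by
    rw [Matrix.mul_assoc, mul_eq_zero_of_forall_mulVec_eq_zero_iff hker, Matrix.mul_zero,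
      trace_zero]
  have hkyFan := trace_transpose_mul_mul_le_of_bottom hG hV hW hGV hbottom
  have hV' := abs_le.mp (hperturb V hV)
  have hW' := abs_le.mp (hperturb W hW)
  rw [htrace V hV] at hV'
  rw [htrace W hW, hTW] at hW'
  linarith [hV'.1, hW'.2]

theorem mul_eq_mul_diagonal_of_forall_mulVec_col {n k : Type*} [Fintype n] [Fintype k]
    [DecidableEq k] {G : Matrix n n ℝ} {V : Matrix n k ℝ} {μ : k → ℝ}
    (h : ∀ a, G *ᵥ (fun i => V i a) = μ a • fun i => V i a) : G * V = V * diagonal μ := by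
  ext i a
  rw [mul_diagonal, mul_apply, mul_comm]
  exact congrFun (h a) i

theorem frobNorm_eq_sqrt_trace {p q : ℕ} (M : Matrix (Fin p) (Fin q) ℝ) :
    frobNorm M = √(Mᵀ * M).trace := by
  rw [frobNorm, Finset.sum_comm]
  simp [trace, mul_apply, sq]

theorem bottom_eigenspace_convergence_general {q d : ℕ}
    (G : ℕ → Matrix (Fin q) (Fin q) ℝ) (Tbar : Matrix (Fin q) (Fin q) ℝ)
    (σ2 δ : ℝ) (hδ : 0 < δ)
    (hGsymm : ∀ m, (G m).IsSymm)
    (hGconv : ∀ a b : Fin q,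
      Tendsto (fun m => G m a b) atTop
        (nhds ((Tbar + σ2 • (1 : Matrix (Fin q) (Fin q) ℝ)) a b)))
    (hTpsd : Tbar.PosSemidef)
    (hgap : ∀ (lam : ℝ) (v : Fin q → ℝ), v ≠ 0 → Tbar.mulVec v = lam • v →
      lam ≠ 0 → δ ≤ lam)
    (Vbar : Matrix (Fin q) (Fin d) ℝ)
    (hVbarOrth : Vbarᵀ * Vbar = 1)
    (hVbarNull : ∀ v : Fin q → ℝ,
      Tbar.mulVec v = 0 ↔ ∃ c : Fin d → ℝ, v = Vbar.mulVec c)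
    (V : ℕ → Matrix (Fin q) (Fin d) ℝ) (μ : ℕ → Fin d → ℝ)
    (hVorth : ∀ m, (V m)ᵀ * (V m) = 1)
    (hVeig : ∀ m (a : Fin d),
      (G m).mulVec (fun i => V m i a) = μ m a • (fun i => V m i a))
    (hVbottom : ∀ m (lam : ℝ) (w : Fin q → ℝ), w ≠ 0 →
      (G m).mulVec w = lam • w → (V m)ᵀ.mulVec w = 0 → ∀ a, μ m a ≤ lam) :
    Tendsto (fun m =>
        frobNorm ((1 - Vbar * Vbarᵀ) * V m)) atTop (nhds 0) := by
  set η := fun m => ∑ i, ∑ j, |(G m - (Tbar + σ2 • (1 : Matrix (Fin q) (Fin q) ℝ))) i j|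
  set ε := fun m => ((V m)ᵀ * (1 - Vbar * Vbarᵀ) * V m).trace
  have hη : Tendsto η atTop (nhds 0) := by
    simpa using tendsto_finsetSum Finset.univ fun i _ => tendsto_finsetSum Finset.univ fun j _ =>
      (((hGconv i j).sub_const ((Tbar + σ2 • 1) i j)).abs.congr fun m => by simp)
  have hbound : ∀ m, ε m ≤ 2 * d * η m / δ := fun m => by
    have := mul_trace_transpose_mul_one_sub_mul_le
      (isHermitian_iff_isSymm.mp hTpsd.isHermitian) (hGsymm m) hVbarOrth (hVorth m) hVbarNull
      hgap (mul_eq_mul_diagonal_of_forall_mulVec_col (hVeig m)) (hVbottom m) σ2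
    rwa [Fintype.card_fin, ← le_div_iff₀' hδ] at this
  have hε : Tendsto ε atTop (nhds 0) :=
    squeeze_zero (fun m => (posSemidef_transpose_mul_one_sub_mul hVbarOrth (V m)).trace_nonneg)
      hbound (by simpa using (hη.const_mul (2 * (d : ℝ))).div_const δ)
  simp_rw [frobNorm_eq_sqrt_trace, transpose_mul_one_sub_mul_self hVbarOrth]
  simpa using hε.sqrt

/-- Davis–Kahan-type subspace convergence: let `G m` be symmetric matrices
converging entrywise to `T̄ + σ² I`, where `T̄` is positive semidefinite with
`d`-dimensional null space and smallest nonzero eigenvalue `≥ δ > 0`.  If the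
columns of `V m` form an orthonormal basis of the eigenspace of `G m` for its
`d` smallest eigenvalues (eigenvalues `μ m`, minimal among all eigenvalues of
`G m` on the orthogonal complement), and `V̄` is a column-orthonormal basis of
`Null(T̄)`, then `‖(I − V̄ V̄ᵀ) (V m)‖ → 0`. -/
theorem bottom_eigenspace_convergence {q d : ℕ}
    (G : ℕ → Matrix (Fin q) (Fin q) ℝ) (Tbar : Matrix (Fin q) (Fin q) ℝ)
    (σ2 δ : ℝ) (hσ : 0 < σ2) (hδ : 0 < δ)
    (hGsymm : ∀ m, (G m).IsSymm)
    (hGconv : ∀ a b : Fin q,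
      Tendsto (fun m => G m a b) atTop
        (nhds ((Tbar + σ2 • (1 : Matrix (Fin q) (Fin q) ℝ)) a b)))
    (hTpsd : Tbar.PosSemidef)
    (hgap : ∀ (lam : ℝ) (v : Fin q → ℝ), v ≠ 0 → Tbar.mulVec v = lam • v →
      lam ≠ 0 → δ ≤ lam)
    (Vbar : Matrix (Fin q) (Fin d) ℝ)
    (hVbarOrth : Vbarᵀ * Vbar = 1)
    (hVbarNull : ∀ v : Fin q → ℝ,
      Tbar.mulVec v = 0 ↔ ∃ c : Fin d → ℝ, v = Vbar.mulVec c)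
    (V : ℕ → Matrix (Fin q) (Fin d) ℝ) (μ : ℕ → Fin d → ℝ)
    (hVorth : ∀ m, (V m)ᵀ * (V m) = 1)
    (hVeig : ∀ m (a : Fin d),
      (G m).mulVec (fun i => V m i a) = μ m a • (fun i => V m i a))
    (hVbottom : ∀ m (lam : ℝ) (w : Fin q → ℝ), w ≠ 0 →
      (G m).mulVec w = lam • w → (V m)ᵀ.mulVec w = 0 → ∀ a, μ m a ≤ lam) :
    Tendsto (fun m =>
        frobNorm ((1 - Vbar * Vbarᵀ) * V m)) atTop (nhds 0) :=
  bottom_eigenspace_convergence_general G Tbar σ2 δ hδ hGsymm hGconv hTpsd hgap Vbar hVbarOrth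
    hVbarNull V μ hVorth hVeig hVbottom
end

section
/- If V_m, V̄ ∈ ℝ^{q×d} are column-orthonormal and ‖V_m − V̄ (V̄ᵀ V_m)‖ → 0, then min over orthogonal Q ∈ O(d) of ‖V̄ᵀ V_m − Q‖ → 0, and consequently min over V̄' with Range(V̄') = Range(V̄) column-orthonormal of ‖V_m − V̄'‖ → 0. -/
/- Along any subsequence, compactness of the column-orthonormal matrices gives a further
subsequence `V m → W` with `Wᵀ W = 1`; the hypothesis forces `W = V̄ (V̄ᵀ W)`. Then
`Q = V̄ᵀ W` satisfies `Qᵀ Q = Wᵀ V̄ V̄ᵀ W = Wᵀ W = 1`, so `V̄ᵀ V m → Q` witnesses the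
first claim, and `W = V̄ Q` with `Q` invertible witnesses the second. -/

open Matrix Filter

open Topology

instance Matrix.firstCountableTopology {m n α : Type*} [TopologicalSpace α]
    [FirstCountableTopology α] [Countable m] [Countable n] :
    FirstCountableTopology (Matrix m n α) :=
  inferInstanceAs (FirstCountableTopology (m → n → α))

section frobNorm

variable {p q : ℕ}

lemma frobNorm_nonneg (M : Matrix (Fin p) (Fin q) ℝ) : 0 ≤ frobNorm M :=
  Real.sqrt_nonneg _

lemma continuous_frobNorm : Continuous (frobNorm : Matrix (Fin p) (Fin q) ℝ → ℝ) := by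
  unfold frobNorm
  fun_prop

lemma abs_apply_le_frobNorm (M : Matrix (Fin p) (Fin q) ℝ) (i : Fin p) (j : Fin q) :
    |M i j| ≤ frobNorm M := by
  rw [← Real.sqrt_sq_eq_abs]
  refine Real.sqrt_le_sqrt ?_
  calc M i j ^ 2 ≤ ∑ j', M i j' ^ 2 :=
        Finset.single_le_sum (fun j' _ => sq_nonneg (M i j')) (Finset.mem_univ j)
    _ ≤ ∑ i', ∑ j', M i' j' ^ 2 :=
        Finset.single_le_sum (f := fun i' => ∑ j', M i' j' ^ 2)
          (fun i' _ => Finset.sum_nonneg fun j' _ => sq_nonneg _) (Finset.mem_univ i)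

lemma tendsto_frobNorm_zero_iff {ι : Type*} {l : Filter ι} {M : ι → Matrix (Fin p) (Fin q) ℝ} :
    Tendsto (fun n => frobNorm (M n)) l (𝓝 0) ↔ Tendsto M l (𝓝 0) := by
  refine ⟨fun h => tendsto_pi_nhds.mpr fun i => tendsto_pi_nhds.mpr fun j => ?_, fun h => ?_⟩
  · exact squeeze_zero_norm (fun n => abs_apply_le_frobNorm (M n) i j) h
  · have h0 := (continuous_frobNorm.tendsto 0).comp h
    rwa [show frobNorm (0 : Matrix (Fin p) (Fin q) ℝ) = 0 by simp [frobNorm]] at h0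

lemma tendsto_sInf_frobNorm_sub_of_subseq {A : ℕ → Matrix (Fin p) (Fin q) ℝ}
    {P : Matrix (Fin p) (Fin q) ℝ → Prop}
    (hA : ∀ ns : ℕ → ℕ, Tendsto ns atTop atTop →
      ∃ ms : ℕ → ℕ, ∃ Q, P Q ∧ Tendsto (fun n => A (ns (ms n))) atTop (𝓝 Q)) :
    Tendsto (fun m => sInf {x : ℝ | ∃ Q, P Q ∧ x = frobNorm (A m - Q)}) atTop (𝓝 0) := by
  refine tendsto_of_subseq_tendsto fun ns hns => ?_
  obtain ⟨ms, Q, hQ, hlim⟩ := hA ns hns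
  refine ⟨ms, squeeze_zero (fun n => Real.sInf_nonneg ?_) (fun n => csInf_le ?_ ⟨Q, hQ, rfl⟩)
    (tendsto_frobNorm_zero_iff.mpr (tendsto_sub_nhds_zero_iff.mpr hlim))⟩
  · rintro x ⟨Q', -, rfl⟩
    exact frobNorm_nonneg _
  · exact ⟨0, by rintro x ⟨Q', -, rfl⟩; exact frobNorm_nonneg _⟩

end frobNorm

lemma IsCompact.exists_subseq_tendsto_of_tendsto {X Y : Type*} [TopologicalSpace X]
    [FirstCountableTopology X] [TopologicalSpace Y] [T2Space Y] {K : Set X} (hK : IsCompact K)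
    {u : ℕ → X} (hu : ∀ n, u n ∈ K) {g : X → Y} (hg : Continuous g) {y : Y}
    (hgu : Tendsto (g ∘ u) atTop (𝓝 y)) :
    ∃ x ∈ K, g x = y ∧ ∃ φ : ℕ → ℕ, StrictMono φ ∧ Tendsto (u ∘ φ) atTop (𝓝 x) := by
  obtain ⟨x, hxK, φ, hφ, hlim⟩ := hK.tendsto_subseq hu
  exact ⟨x, hxK, tendsto_nhds_unique ((hg.tendsto x).comp hlim)
    (hgu.comp hφ.tendsto_atTop), φ, hφ, hlim⟩

section Orthonormal

variable {m n : Type*}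

lemma abs_apply_le_one_of_transpose_mul_self_eq_one [Fintype m] [DecidableEq n] {V : Matrix m n ℝ}
    (hV : Vᵀ * V = 1) (i : m) (j : n) : |V i j| ≤ 1 := by
  have hcol : ∑ k, V k j ^ 2 = 1 := by
    simpa [Matrix.mul_apply, pow_two] using congrFun (congrFun hV j) j
  rw [← sq_le_one_iff_abs_le_one, ← hcol]
  exact Finset.single_le_sum (f := fun k => V k j ^ 2) (fun k _ => sq_nonneg _)
    (Finset.mem_univ i)

lemma isCompact_setOf_transpose_mul_self_eq_one [Fintype m] [DecidableEq n] :
    IsCompact {V : Matrix m n ℝ | Vᵀ * V = 1} := by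
  refine (isCompact_univ_pi fun _ => isCompact_univ_pi fun _ => isCompact_Icc (a := -1) (b := 1))
    |>.of_isClosed_subset (isClosed_eq (by fun_prop) continuous_const) fun V hV => ?_
  exact Set.mem_univ_pi.mpr fun i => Set.mem_univ_pi.mpr fun j =>
    abs_le.mp (abs_apply_le_one_of_transpose_mul_self_eq_one hV i j)

variable {R : Type*} [CommSemiring R]

lemma transpose_mul_self_of_eq_mul_transpose_mul [Fintype m] [Fintype n] {U W : Matrix m n R}
    (hW : W = U * (Uᵀ * W)) : (Uᵀ * W)ᵀ * (Uᵀ * W) = Wᵀ * W := by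
  rw [transpose_mul, transpose_transpose, Matrix.mul_assoc, ← hW]

lemma exists_mulVec_mul_iff_of_mul_eq_one [Fintype n] [DecidableEq n] {U : Matrix m n R}
    {A B : Matrix n n R} (hAB : A * B = 1) (v : m → R) :
    (∃ c, v = (U * A) *ᵥ c) ↔ ∃ c, v = U *ᵥ c := by
  constructor
  · rintro ⟨c, rfl⟩
    exact ⟨A *ᵥ c, (mulVec_mulVec c U A).symm⟩
  · rintro ⟨c, rfl⟩
    exact ⟨B *ᵥ c, by rw [mulVec_mulVec, Matrix.mul_assoc, hAB, Matrix.mul_one]⟩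

end Orthonormal

theorem orthonormal_representative_convergence_general {q d : ℕ}
    (V : ℕ → Matrix (Fin q) (Fin d) ℝ) (Vbar : Matrix (Fin q) (Fin d) ℝ)
    (hVorth : ∀ m, (V m)ᵀ * (V m) = 1)
    (h : Tendsto (fun m => frobNorm (V m - Vbar * (Vbarᵀ * V m))) atTop (nhds 0)) :
    Tendsto (fun m => sInf { x : ℝ | ∃ Q : Matrix (Fin d) (Fin d) ℝ,
        Qᵀ * Q = 1 ∧ x = frobNorm (Vbarᵀ * V m - Q) }) atTop (nhds 0) ∧
    Tendsto (fun m => sInf { x : ℝ | ∃ V' : Matrix (Fin q) (Fin d) ℝ,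
        V'ᵀ * V' = 1 ∧
        (∀ v : Fin q → ℝ, (∃ c, v = V'.mulVec c) ↔ ∃ c, v = Vbar.mulVec c) ∧
        x = frobNorm (V m - V') }) atTop (nhds 0) := by
  have hlimit : ∀ ns : ℕ → ℕ, Tendsto ns atTop atTop → ∃ W, Wᵀ * W = 1 ∧
      W = Vbar * (Vbarᵀ * W) ∧ ∃ φ : ℕ → ℕ, Tendsto (V ∘ ns ∘ φ) atTop (𝓝 W) := by
    intro ns hns
    obtain ⟨W, hW, hWproj, φ, -, hφ⟩ :=
      isCompact_setOf_transpose_mul_self_eq_one.exists_subseq_tendsto_of_tendsto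
        (fun n => hVorth (ns n)) (g := fun W => W - Vbar * (Vbarᵀ * W)) (by fun_prop)
        ((tendsto_frobNorm_zero_iff.mp h).comp hns)
    exact ⟨W, hW, sub_eq_zero.mp hWproj, φ, hφ⟩
  have horth {W : Matrix (Fin q) (Fin d) ℝ} (hW : Wᵀ * W = 1)
      (hWproj : W = Vbar * (Vbarᵀ * W)) : (Vbarᵀ * W)ᵀ * (Vbarᵀ * W) = 1 :=
    (transpose_mul_self_of_eq_mul_transpose_mul hWproj).trans hW
  constructor
  · refine tendsto_sInf_frobNorm_sub_of_subseq fun ns hns => ?_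
    obtain ⟨W, hW, hWproj, φ, hφ⟩ := hlimit ns hns
    exact ⟨φ, Vbarᵀ * W, horth hW hWproj,
      ((continuous_const.matrix_mul continuous_id).tendsto W).comp hφ⟩
  · -- regroup `a ∧ b ∧ x = _` as `(a ∧ b) ∧ x = _`, the shape of the subsequence lemma
    simp only [← and_assoc]
    refine tendsto_sInf_frobNorm_sub_of_subseq fun ns hns => ?_
    obtain ⟨W, hW, hWproj, φ, hφ⟩ := hlimit ns hns
    have hrange :=
      exists_mulVec_mul_iff_of_mul_eq_one (U := Vbar) (mul_eq_one_comm.mp (horth hW hWproj))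
    rw [← hWproj] at hrange
    exact ⟨φ, W, ⟨hW, hrange⟩, hφ⟩

/-- If `V m` and `V̄` are column-orthonormal and `‖V m − V̄ (V̄ᵀ V m)‖ → 0`, then
the distance from `V̄ᵀ V m` to the orthogonal group tends to `0`, and consequently
the distance from `V m` to the set of column-orthonormal matrices with the same
range as `V̄` tends to `0`. -/
theorem orthonormal_representative_convergence {q d : ℕ}
    (V : ℕ → Matrix (Fin q) (Fin d) ℝ) (Vbar : Matrix (Fin q) (Fin d) ℝ)
    (hVorth : ∀ m, (V m)ᵀ * (V m) = 1)
    (hVbarOrth : Vbarᵀ * Vbar = 1)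
    (h : Tendsto (fun m => frobNorm (V m - Vbar * (Vbarᵀ * V m))) atTop (nhds 0)) :
    Tendsto (fun m => sInf { x : ℝ | ∃ Q : Matrix (Fin d) (Fin d) ℝ,
        Qᵀ * Q = 1 ∧ x = frobNorm (Vbarᵀ * V m - Q) }) atTop (nhds 0) ∧
    Tendsto (fun m => sInf { x : ℝ | ∃ V' : Matrix (Fin q) (Fin d) ℝ,
        V'ᵀ * V' = 1 ∧
        (∀ v : Fin q → ℝ, (∃ c, v = V'.mulVec c) ↔ ∃ c, v = Vbar.mulVec c) ∧
        x = frobNorm (V m - V') }) atTop (nhds 0) :=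
  orthonormal_representative_convergence_general V Vbar hVorth h
end
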